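/- arXiv:2305.04494 — 2 statements merged into one kernel-verified Lean document; each statement's English description precedes it below -/
import Mathlib

section
/- Let 0 ≤ θ < π/2, let A and B be n×n complex matrices in the sector class S_θ, let 0 < m ≤ M be real numbers with mI ≤ ℜA ≤ MI and mI ≤ ℜB ≤ MI (Loewner order), let v ∈ [0,1], and let Φ be a positive unital linear map on M_n(ℂ). Then cos²θ · Φ(ℜ(A∇_vB)) + mM · (Φ(ℜ(A!_vB)))⁻¹ ≤ (M+m)·I in the Loewner order. (This is the arithmetic–harmonic instance σ₁ = ∇_v, σ₂ = !_v of the paper's Proposition on means between σ and σ*.) -/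
open Matrix
open scoped ComplexOrder

/-- The real part `(A + Aᴴ)/2` of a complex matrix. -/
noncomputable def matRe {n : ℕ} (A : Matrix (Fin n) (Fin n) ℂ) : Matrix (Fin n) (Fin n) ℂ :=
  (2⁻¹ : ℂ) • (A + Aᴴ)

/-- The imaginary part `(A - Aᴴ)/(2i)` of a complex matrix. -/
noncomputable def matIm {n : ℕ} (A : Matrix (Fin n) (Fin n) ℂ) : Matrix (Fin n) (Fin n) ℂ :=
  (2 * Complex.I)⁻¹ • (A - Aᴴ)

/-- Loewner order: `Y - X` is positive semidefinite. -/
def loewnerLE {n : ℕ} (X Y : Matrix (Fin n) (Fin n) ℂ) : Prop := (Y - X).PosSemidef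

/-- `A` lies in the sector class `S_θ`: its real part is positive definite and for all `x`,
`|⟨(ℑA)x, x⟩| ≤ tan θ · ⟨(ℜA)x, x⟩`. -/
def sectorClass {n : ℕ} (θ : ℝ) (A : Matrix (Fin n) (Fin n) ℂ) : Prop :=
  (matRe A).PosDef ∧
    ∀ x : Fin n → ℂ,
      |(star x ⬝ᵥ (matIm A).mulVec x).re| ≤ Real.tan θ * (star x ⬝ᵥ (matRe A).mulVec x).re

/-- The `v`-weighted arithmetic mean `A ∇_v B = v A + (1 - v) B`. -/
noncomputable def amean {n : ℕ} (v : ℝ) (A B : Matrix (Fin n) (Fin n) ℂ) :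
    Matrix (Fin n) (Fin n) ℂ :=
  (v : ℂ) • A + ((1 - v : ℝ) : ℂ) • B

/-- The `v`-weighted harmonic mean `A !_v B = (v A⁻¹ + (1 - v) B⁻¹)⁻¹`. -/
noncomputable def hmean {n : ℕ} (v : ℝ) (A B : Matrix (Fin n) (Fin n) ℂ) :
    Matrix (Fin n) (Fin n) ℂ :=
  ((v : ℂ) • A⁻¹ + ((1 - v : ℝ) : ℂ) • B⁻¹)⁻¹

/-- A linear map on matrices is positive and unital. -/
def IsPosUnitalMap {n : ℕ}
    (Φ : Matrix (Fin n) (Fin n) ℂ →ₗ[ℂ] Matrix (Fin n) (Fin n) ℂ) : Prop :=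
  Φ 1 = 1 ∧ ∀ X : Matrix (Fin n) (Fin n) ℂ, X.PosSemidef → (Φ X).PosSemidef

/-- The numerical radius `ω(A) = sup { |⟨Ax, x⟩| : ‖x‖ = 1 }` (ℓ² norm). -/
noncomputable def numRadius {n : ℕ} (A : Matrix (Fin n) (Fin n) ℂ) : ℝ :=
  sSup {r : ℝ | ∃ x : EuclideanSpace ℂ (Fin n), ‖x‖ = 1 ∧
    r = ‖star (x : Fin n → ℂ) ⬝ᵥ A.mulVec (x : Fin n → ℂ)‖}

/-- The spectral norm (ℓ² → ℓ² operator norm) of a matrix. -/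
noncomputable def matSpectralNorm {n : ℕ} (A : Matrix (Fin n) (Fin n) ℂ) : ℝ :=
  ‖Matrix.toEuclideanCLM (𝕜 := ℂ) A‖

/-!
Since `cos² θ ≤ 1` and `Φ (ℜ (A ∇ᵥ B)) ≥ 0`, the factor `cos² θ` may be dropped. Two facts about
`H := ℜA !ᵥ ℜB` then finish the proof.

* `H ≤ ℜ (A !ᵥ B)`: for accretive `T` one has `(ℜ T⁻¹)⁻¹ = Tᴴ (ℜ T)⁻¹ T`, which is jointly convex
  in `T` (the map `(X, K) ↦ Xᴴ K⁻¹ X` is jointly convex) and equals `(ℜ A)⁻¹` at `T = A⁻¹`.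
  Hence `(Φ (ℜ (A !ᵥ B)))⁻¹ ≤ (Φ H)⁻¹ ≤ Φ (H⁻¹)`, the second step being Choi's inequality.
* `m ≤ R ≤ M` implies `R + m M R⁻¹ ≤ M + m` (each eigenvalue satisfies `(M - λ)(λ - m) ≥ 0`);
  averaging over `R = ℜA, ℜB` gives `ℜ (A ∇ᵥ B) + m M H⁻¹ ≤ M + m`, and `Φ` preserves this.
-/

open Unitary
open scoped MatrixOrder

namespace Matrix

variable {ι κ 𝕜 : Type*} [RCLike 𝕜]

lemma PosDef.of_le {A B : Matrix ι ι 𝕜} (hA : A.PosDef) (hAB : A ≤ B) : B.PosDef := by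
  simpa using hA.add_posSemidef (le_iff.1 hAB)

lemma PosDef.convexComb {A B : Matrix ι ι 𝕜} (hA : A.PosDef) (hB : B.PosDef) {v : ℝ} (hv0 : 0 ≤ v)
    (hv1 : v ≤ 1) : (v • A + (1 - v) • B).PosDef := by
  rcases hv0.lt_or_eq with hv | rfl
  · exact (hA.smul hv).add_posSemidef (hB.posSemidef.smul (sub_nonneg.2 hv1))
  · simpa using hB

variable [Fintype ι] [Fintype κ]

lemma IsHermitian.star_mulVec_dotProduct {H : Matrix ι ι 𝕜} (hH : H.IsHermitian) (x y : ι → 𝕜) :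
    star (H *ᵥ x) ⬝ᵥ y = star x ⬝ᵥ H *ᵥ y := by
  rw [star_mulVec, hH.eq, dotProduct_mulVec]

lemma IsHermitian.re_dotProduct_mulVec_comm {H : Matrix ι ι 𝕜} (hH : H.IsHermitian)
    (x y : ι → 𝕜) : RCLike.re (star y ⬝ᵥ H *ᵥ x) = RCLike.re (star x ⬝ᵥ H *ᵥ y) := by
  rw [← RCLike.conj_re, ← RCLike.star_def, star_dotProduct, star_star,
    hH.star_mulVec_dotProduct]

lemma dotProduct_conjTranspose_mul_mul_mulVec (X : Matrix ι κ 𝕜) (K : Matrix ι ι 𝕜)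
    (x : κ → 𝕜) : star x ⬝ᵥ (Xᴴ * K * X) *ᵥ x = star (X *ᵥ x) ⬝ᵥ K *ᵥ (X *ᵥ x) := by
  rw [← mulVec_mulVec, ← mulVec_mulVec, dotProduct_mulVec, ← star_mulVec]

lemma PosSemidef.two_mul_re_dotProduct_mulVec_le {Q : Matrix ι ι 𝕜} (hQ : Q.PosSemidef)
    {t : ℝ} (ht : 0 < t) (x y : ι → 𝕜) :
    2 * RCLike.re (star x ⬝ᵥ Q *ᵥ y) ≤
      t * RCLike.re (star x ⬝ᵥ Q *ᵥ x) + t⁻¹ * RCLike.re (star y ⬝ᵥ Q *ᵥ y) := by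
  have h := hQ.re_dotProduct_nonneg (t • x - y)
  simp only [star_sub, star_smul, star_trivial, mulVec_sub, mulVec_smul, dotProduct_sub,
    sub_dotProduct, dotProduct_smul, smul_dotProduct, map_sub, RCLike.smul_re,
    hQ.1.re_dotProduct_mulVec_comm x y] at h
  refine sub_nonneg.1 ((mul_nonneg_iff_of_pos_left ht).1 (h.trans_eq ?_))
  field_simp
  ring

lemma le_iff_re_dotProduct_mulVec_le {A B : Matrix ι ι 𝕜} (hA : A.IsHermitian)
    (hB : B.IsHermitian) :
    A ≤ B ↔ ∀ x, RCLike.re (star x ⬝ᵥ A *ᵥ x) ≤ RCLike.re (star x ⬝ᵥ B *ᵥ x) := by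
  refine ⟨fun h x => ?_, fun h => ?_⟩
  · simpa [sub_mulVec] using (le_iff.1 h).re_dotProduct_nonneg x
  · refine PosSemidef.of_dotProduct_mulVec_nonneg (hB.sub hA) fun x => ?_
    refine RCLike.nonneg_iff.2 ⟨?_, (hB.sub hA).im_star_dotProduct_mulVec_self x⟩
    simpa [sub_mulVec] using h x

variable [DecidableEq ι]

namespace PosDef

/- The next two lemmas say `x* S⁻¹ x = max_z (2 Re ⟨z, x⟩ - z* S z)`, attained at `z = S⁻¹ x`:
this presents `S⁻¹` as a supremum of functions affine in `S`. -/

lemma two_mul_re_dotProduct_sub_le {S : Matrix ι ι 𝕜} (hS : S.PosDef) (y z : ι → 𝕜) :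
    2 * RCLike.re (star z ⬝ᵥ y) - RCLike.re (star z ⬝ᵥ S *ᵥ z) ≤
      RCLike.re (star y ⬝ᵥ S⁻¹ *ᵥ y) := by
  have hdet := (isUnit_iff_isUnit_det S).1 hS.isUnit
  have h := hS.inv.posSemidef.two_mul_re_dotProduct_mulVec_le one_pos (S *ᵥ z) y
  simp only [hS.1.star_mulVec_dotProduct, mulVec_mulVec, mul_nonsing_inv _ hdet,
    nonsing_inv_mul _ hdet, one_mulVec, one_mul, inv_one] at h
  linarith

lemma re_dotProduct_inv_mulVec_le {S : Matrix ι ι 𝕜} (hS : S.PosDef) (y : ι → 𝕜) {c : ℝ}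
    (h : ∀ z, 2 * RCLike.re (star z ⬝ᵥ y) - RCLike.re (star z ⬝ᵥ S *ᵥ z) ≤ c) :
    RCLike.re (star y ⬝ᵥ S⁻¹ *ᵥ y) ≤ c := by
  have hz := h (S⁻¹ *ᵥ y)
  rwa [mulVec_mulVec, mul_nonsing_inv _ ((isUnit_iff_isUnit_det S).1 hS.isUnit), one_mulVec,
    hS.inv.1.star_mulVec_dotProduct, two_mul, add_sub_cancel_right] at hz

lemma inv_le_inv_of_le {S T : Matrix ι ι 𝕜} (hS : S.PosDef) (hST : S ≤ T) : T⁻¹ ≤ S⁻¹ := by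
  have hT := hS.of_le hST
  refine (le_iff_re_dotProduct_mulVec_le hT.inv.1 hS.inv.1).2 fun y =>
    hT.re_dotProduct_inv_mulVec_le y fun z => ?_
  have := (le_iff_re_dotProduct_mulVec_le hS.1 hT.1).1 hST z
  linarith [hS.two_mul_re_dotProduct_sub_le y z]

end PosDef

theorem conjTranspose_mul_inv_mul_convexComb_le {H₁ H₂ : Matrix ι ι 𝕜} (h₁ : H₁.PosDef)
    (h₂ : H₂.PosDef) (X₁ X₂ : Matrix ι κ 𝕜) {v : ℝ} (hv0 : 0 ≤ v) (hv1 : v ≤ 1) :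
    (v • X₁ + (1 - v) • X₂)ᴴ * (v • H₁ + (1 - v) • H₂)⁻¹ * (v • X₁ + (1 - v) • X₂) ≤
      v • (X₁ᴴ * H₁⁻¹ * X₁) + (1 - v) • (X₂ᴴ * H₂⁻¹ * X₂) := by
  have hH := h₁.convexComb h₂ hv0 hv1
  have hRHS := ((h₁.inv.posSemidef.conjTranspose_mul_mul_same X₁).smul hv0).add
    ((h₂.inv.posSemidef.conjTranspose_mul_mul_same X₂).smul (sub_nonneg.2 hv1))
  refine (le_iff_re_dotProduct_mulVec_le (isHermitian_conjTranspose_mul_mul _ hH.inv.1)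
    hRHS.1).2 fun x => ?_
  rw [dotProduct_conjTranspose_mul_mul_mulVec]
  refine hH.re_dotProduct_inv_mulVec_le _ fun z => ?_
  have e₁ := mul_le_mul_of_nonneg_left (h₁.two_mul_re_dotProduct_sub_le (X₁ *ᵥ x) z) hv0
  have e₂ := mul_le_mul_of_nonneg_left (h₂.two_mul_re_dotProduct_sub_le (X₂ *ᵥ x) z)
    (sub_nonneg.2 hv1)
  simp only [add_mulVec, smul_mulVec, dotProduct_add, dotProduct_smul, map_add,
    RCLike.smul_re, dotProduct_conjTranspose_mul_mul_mulVec] at e₁ e₂ ⊢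
  linarith

namespace IsHermitian

variable {A : Matrix ι ι 𝕜} (hA : A.IsHermitian)

noncomputable def eigenProj (i : ι) : Matrix ι ι 𝕜 :=
  conjStarAlgAut 𝕜 _ hA.eigenvectorUnitary (diagonal (Pi.single i 1))

lemma eigenProj_posSemidef (i : ι) : (hA.eigenProj i).PosSemidef := by
  exact (posSemidef_diagonal_iff.2 (Pi.single_nonneg.2 zero_le_one)).mul_mul_conjTranspose_same _

lemma sum_smul_eigenProj (d : ι → ℝ) :
    ∑ i, d i • hA.eigenProj i =
      conjStarAlgAut 𝕜 _ hA.eigenvectorUnitary (diagonal fun i => (d i : 𝕜)) := by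
  have : (diagonal fun i => (d i : 𝕜)) = ∑ i, (d i : 𝕜) • diagonal (Pi.single i 1) := by
    ext j k
    by_cases h : j = k
    · simp [h, Matrix.sum_apply, Pi.single_apply, RCLike.real_smul_eq_coe_mul]
    · simp [h, Matrix.sum_apply]
  simp only [eigenProj, this, map_sum, map_smul, RCLike.real_smul_eq_coe_smul (K := 𝕜)]

lemma sum_eigenProj : ∑ i, hA.eigenProj i = 1 := by
  simpa using hA.sum_smul_eigenProj 1

lemma sum_eigenvalues_smul_eigenProj : ∑ i, hA.eigenvalues i • hA.eigenProj i = A := by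
  rw [sum_smul_eigenProj]
  exact hA.spectral_theorem.symm

lemma star_eigenvectorBasis_dotProduct_self (i : ι) :
    star ⇑(hA.eigenvectorBasis i) ⬝ᵥ ⇑(hA.eigenvectorBasis i) = 1 := by
  rw [dotProduct_comm, ← EuclideanSpace.inner_eq_star_dotProduct, hA.eigenvectorBasis.inner_eq_one]

lemma re_dotProduct_smul_one_mulVec_eigenvectorBasis (r : ℝ) (i : ι) :
    RCLike.re (star ⇑(hA.eigenvectorBasis i) ⬝ᵥ (r • 1 : Matrix ι ι 𝕜) *ᵥ
      ⇑(hA.eigenvectorBasis i)) = r := by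
  rw [smul_mulVec, one_mulVec, dotProduct_smul, hA.star_eigenvectorBasis_dotProduct_self,
    RCLike.smul_re, RCLike.one_re, mul_one]

lemma le_eigenvalues {m : ℝ} (h : m • 1 ≤ A) (i : ι) : m ≤ hA.eigenvalues i := by
  have := (le_iff_re_dotProduct_mulVec_le (isHermitian_one.smul (.all m)) hA).1 h
    (hA.eigenvectorBasis i)
  rwa [← hA.eigenvalues_eq, hA.re_dotProduct_smul_one_mulVec_eigenvectorBasis] at this

lemma eigenvalues_le {M : ℝ} (h : A ≤ M • 1) (i : ι) : hA.eigenvalues i ≤ M := by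
  have := (le_iff_re_dotProduct_mulVec_le hA (isHermitian_one.smul (.all M))).1 h
    (hA.eigenvectorBasis i)
  rwa [← hA.eigenvalues_eq, hA.re_dotProduct_smul_one_mulVec_eigenvectorBasis] at this

end IsHermitian

lemma PosDef.sum_inv_eigenvalues_smul_eigenProj {A : Matrix ι ι 𝕜} (hA : A.PosDef) :
    ∑ i, (hA.1.eigenvalues i)⁻¹ • hA.1.eigenProj i = A⁻¹ := by
  refine (inv_eq_right_inv ?_).symm
  nth_rw 1 [← hA.1.sum_eigenvalues_smul_eigenProj]
  rw [IsHermitian.sum_smul_eigenProj, IsHermitian.sum_smul_eigenProj, ← map_mul,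
    diagonal_mul_diagonal]
  have h1 : (fun i => (hA.1.eigenvalues i : 𝕜) * ((hA.1.eigenvalues i)⁻¹ : ℝ)) = fun _ => 1 :=
    funext fun i => by simp [(hA.eigenvalues_pos i).ne']
  rw [h1, diagonal_one, map_one]

theorem add_smul_inv_le {R : Matrix ι ι 𝕜} {m M : ℝ} (hm : 0 < m) (hmR : m • 1 ≤ R)
    (hRM : R ≤ M • 1) : R + (m * M) • R⁻¹ ≤ (M + m) • 1 := by
  have hR : R.PosDef := (PosDef.one.smul hm).of_le hmR
  have key (i : ι) :
      hR.1.eigenvalues i + m * M * (hR.1.eigenvalues i)⁻¹ ≤ M + m := by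
    have hml := hR.1.le_eigenvalues hmR i
    have hlM := hR.1.eigenvalues_le hRM i
    have hl := hR.eigenvalues_pos i
    rw [← sub_nonneg]
    have : M + m - (hR.1.eigenvalues i + m * M * (hR.1.eigenvalues i)⁻¹) =
        (M - hR.1.eigenvalues i) * (hR.1.eigenvalues i - m) / hR.1.eigenvalues i := by
      field_simp
      ring
    rw [this]
    exact div_nonneg (mul_nonneg (sub_nonneg.2 hlM) (sub_nonneg.2 hml)) hl.le
  calc R + (m * M) • R⁻¹
      = ∑ i, (hR.1.eigenvalues i + m * M * (hR.1.eigenvalues i)⁻¹) • hR.1.eigenProj i := by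
        simp only [add_smul, Finset.sum_add_distrib, mul_smul, ← Finset.smul_sum,
          hR.1.sum_eigenvalues_smul_eigenProj, hR.sum_inv_eigenvalues_smul_eigenProj]
    _ ≤ ∑ i, (M + m) • hR.1.eigenProj i := Finset.sum_le_sum fun i _ =>
        smul_le_smul_of_nonneg_right (key i) (hR.1.eigenProj_posSemidef i).nonneg
    _ = (M + m) • 1 := by rw [← Finset.smul_sum, hR.1.sum_eigenProj]

section Resolution

variable {κ' : Type*} [Fintype κ'] {F : κ' → Matrix ι ι 𝕜} {w : κ' → ℝ}

lemma posDef_sum_smul (hF : ∀ j, (F j).PosSemidef) (hsum : ∑ j, F j = 1)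
    (hw : ∀ j, 0 < w j) : (∑ j, w j • F j).PosDef := by
  obtain ⟨ε, hε, hεw⟩ : ∃ ε : ℝ, 0 < ε ∧ ∀ j, ε ≤ w j := by
    rcases isEmpty_or_nonempty κ' with _ | _
    · exact ⟨1, one_pos, isEmptyElim⟩
    · obtain ⟨j, -, hj⟩ := Finset.univ.exists_min_image w Finset.univ_nonempty
      exact ⟨w j, hw j, fun i => hj i (Finset.mem_univ i)⟩
  refine (PosDef.one.smul hε).of_le ?_
  rw [← hsum, Finset.smul_sum]
  exact Finset.sum_le_sum fun j _ => smul_le_smul_of_nonneg_right (hεw j) (hF j).nonneg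

theorem inv_sum_smul_le_sum_inv_smul (hF : ∀ j, (F j).PosSemidef) (hsum : ∑ j, F j = 1)
    (hw : ∀ j, 0 < w j) : (∑ j, w j • F j)⁻¹ ≤ ∑ j, (w j)⁻¹ • F j := by
  have hS := posDef_sum_smul hF hsum hw
  have hK := posSemidef_sum Finset.univ fun j _ => (hF j).smul (inv_nonneg.2 (hw j).le)
  refine (le_iff_re_dotProduct_mulVec_le hS.inv.1 hK.1).2 fun y =>
    hS.re_dotProduct_inv_mulVec_le y fun z => ?_
  have h := Finset.sum_le_sum fun j (_ : j ∈ Finset.univ) =>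
    (hF j).two_mul_re_dotProduct_mulVec_le (hw j) z y
  have hzy : ∑ j, RCLike.re (star z ⬝ᵥ F j *ᵥ y) = RCLike.re (star z ⬝ᵥ y) := by
    rw [← map_sum, ← dotProduct_sum, ← sum_mulVec, hsum, one_mulVec]
  simp only [sum_mulVec, dotProduct_sum, smul_mulVec, dotProduct_smul, map_sum, RCLike.smul_re,
    ← Finset.mul_sum, Finset.sum_add_distrib] at h ⊢
  linarith

end Resolution

end Matrix

section MatRe

variable {n : ℕ}

lemma matRe_add (A B : Matrix (Fin n) (Fin n) ℂ) : matRe (A + B) = matRe A + matRe B := by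
  simp only [matRe, conjTranspose_add, ← smul_add]
  abel_nf

lemma matRe_smul (r : ℝ) (A : Matrix (Fin n) (Fin n) ℂ) : matRe (r • A) = r • matRe A := by
  simp only [matRe, conjTranspose_smul, star_trivial, ← smul_add, smul_comm r]

lemma isUnit_of_posDef_matRe {A : Matrix (Fin n) (Fin n) ℂ} (hA : (matRe A).PosDef) :
    IsUnit A := by
  rw [isUnit_iff_isUnit_det, isUnit_iff_ne_zero]
  intro hdet
  obtain ⟨x, hx0, hx⟩ := exists_mulVec_eq_zero_iff.2 hdet
  have h0 : star x ⬝ᵥ matRe A *ᵥ x = 0 := by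
    rw [matRe, smul_mulVec, add_mulVec, dotProduct_smul, dotProduct_add,
      dotProduct_mulVec (star x) Aᴴ, ← star_mulVec, hx]
    simp
  exact (hA.dotProduct_mulVec_pos hx0).ne' h0

lemma matRe_inv {A : Matrix (Fin n) (Fin n) ℂ} (hA : IsUnit A) :
    matRe A⁻¹ = A⁻¹ * matRe A * A⁻¹ᴴ := by
  have hdet := (isUnit_iff_isUnit_det A).1 hA
  have hdetH : IsUnit Aᴴ.det := by rw [det_conjTranspose]; exact hdet.star
  rw [matRe, matRe, Matrix.mul_smul, Matrix.smul_mul, conjTranspose_nonsing_inv, Matrix.mul_add,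
    Matrix.add_mul, nonsing_inv_mul _ hdet, Matrix.one_mul, Matrix.mul_assoc,
    mul_nonsing_inv _ hdetH, Matrix.mul_one, add_comm]

lemma posDef_matRe_inv {A : Matrix (Fin n) (Fin n) ℂ} (hA : (matRe A).PosDef) :
    (matRe A⁻¹).PosDef := by
  rw [matRe_inv (isUnit_of_posDef_matRe hA), ← star_eq_conjTranspose]
  exact (IsUnit.posDef_star_right_conjugate_iff
    (isUnit_nonsing_inv_iff.2 (isUnit_of_posDef_matRe hA))).2 hA

lemma inv_matRe_inv {A : Matrix (Fin n) (Fin n) ℂ} (hA : (matRe A).PosDef) :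
    (matRe A⁻¹)⁻¹ = Aᴴ * (matRe A)⁻¹ * A := by
  have hdet := (isUnit_iff_isUnit_det A).1 (isUnit_of_posDef_matRe hA)
  rw [matRe_inv (isUnit_of_posDef_matRe hA), Matrix.mul_inv_rev, Matrix.mul_inv_rev,
    ← conjTranspose_nonsing_inv, nonsing_inv_nonsing_inv _ hdet, ← Matrix.mul_assoc]

theorem hmean_matRe_le_matRe_hmean {A B : Matrix (Fin n) (Fin n) ℂ} (hA : (matRe A).PosDef)
    (hB : (matRe B).PosDef) {v : ℝ} (hv0 : 0 ≤ v) (hv1 : v ≤ 1) :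
    hmean v (matRe A) (matRe B) ≤ matRe (hmean v A B) := by
  simp only [hmean, Complex.coe_smul]
  set T := v • A⁻¹ + (1 - v) • B⁻¹
  have hT : (matRe T).PosDef := by
    rw [matRe_add, matRe_smul, matRe_smul]
    exact (posDef_matRe_inv hA).convexComb (posDef_matRe_inv hB) hv0 hv1
  have hA' := (isUnit_iff_isUnit_det A).1 (isUnit_of_posDef_matRe hA)
  have hB' := (isUnit_iff_isUnit_det B).1 (isUnit_of_posDef_matRe hB)
  have hconv := conjTranspose_mul_inv_mul_convexComb_le (posDef_matRe_inv hA)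
    (posDef_matRe_inv hB) A⁻¹ B⁻¹ hv0 hv1
  rw [← inv_matRe_inv (posDef_matRe_inv hA), ← inv_matRe_inv (posDef_matRe_inv hB),
    nonsing_inv_nonsing_inv _ hA', nonsing_inv_nonsing_inv _ hB', ← matRe_smul, ← matRe_smul,
    ← matRe_add, ← inv_matRe_inv hT] at hconv
  have := (posDef_matRe_inv hT).inv.inv_le_inv_of_le hconv
  rwa [nonsing_inv_nonsing_inv _ ((isUnit_iff_isUnit_det _).1 (posDef_matRe_inv hT).isUnit)]
    at this

lemma matRe_amean (v : ℝ) (A B : Matrix (Fin n) (Fin n) ℂ) :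
    matRe (amean v A B) = amean v (matRe A) (matRe B) := by
  simp only [amean, Complex.coe_smul, matRe_add, matRe_smul]

end MatRe

section Means

variable {n : ℕ} {R S : Matrix (Fin n) (Fin n) ℂ} {v : ℝ}

lemma posDef_hmean (hR : R.PosDef) (hS : S.PosDef) (hv0 : 0 ≤ v) (hv1 : v ≤ 1) :
    (hmean v R S).PosDef := by
  simpa only [hmean, Complex.coe_smul] using (hR.inv.convexComb hS.inv hv0 hv1).inv

theorem amean_add_smul_inv_hmean_le {m M : ℝ} (hm : 0 < m) (hmR : m • 1 ≤ R) (hRM : R ≤ M • 1)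
    (hmS : m • 1 ≤ S) (hSM : S ≤ M • 1) (hv0 : 0 ≤ v) (hv1 : v ≤ 1) :
    amean v R S + (m * M) • (hmean v R S)⁻¹ ≤ (M + m) • 1 := by
  have hW := ((PosDef.one.smul hm).of_le hmR).inv.convexComb
    ((PosDef.one.smul hm).of_le hmS).inv hv0 hv1
  simp only [amean, hmean, Complex.coe_smul,
    nonsing_inv_nonsing_inv _ ((isUnit_iff_isUnit_det _).1 hW.isUnit)]
  calc v • R + (1 - v) • S + (m * M) • (v • R⁻¹ + (1 - v) • S⁻¹)
      = v • (R + (m * M) • R⁻¹) + (1 - v) • (S + (m * M) • S⁻¹) := by module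
    _ ≤ v • ((M + m) • 1) + (1 - v) • ((M + m) • 1) :=
        add_le_add (smul_le_smul_of_nonneg_left (add_smul_inv_le hm hmR hRM) hv0)
          (smul_le_smul_of_nonneg_left (add_smul_inv_le hm hmS hSM) (sub_nonneg.2 hv1))
    _ = (M + m) • 1 := by module

end Means

namespace IsPosUnitalMap

variable {n : ℕ} {Φ : Matrix (Fin n) (Fin n) ℂ →ₗ[ℂ] Matrix (Fin n) (Fin n) ℂ}
  {X Y Z : Matrix (Fin n) (Fin n) ℂ}

lemma map_mono (hΦ : IsPosUnitalMap Φ) (h : X ≤ Y) : Φ X ≤ Φ Y := by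
  rw [le_iff, ← map_sub]
  exact hΦ.2 _ h

lemma map_posDef (hΦ : IsPosUnitalMap Φ) (hZ : Z.PosDef) : (Φ Z).PosDef := by
  have := posDef_sum_smul (fun i => hΦ.2 _ (hZ.1.eigenProj_posSemidef i))
    (by rw [← map_sum, hZ.1.sum_eigenProj, hΦ.1]) hZ.eigenvalues_pos
  simpa only [← LinearMap.map_smul_of_tower, ← map_sum, hZ.1.sum_eigenvalues_smul_eigenProj]
    using this

lemma inv_map_le_map_inv (hΦ : IsPosUnitalMap Φ) (hZ : Z.PosDef) : (Φ Z)⁻¹ ≤ Φ Z⁻¹ := by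
  have := inv_sum_smul_le_sum_inv_smul (fun i => hΦ.2 _ (hZ.1.eigenProj_posSemidef i))
    (by rw [← map_sum, hZ.1.sum_eigenProj, hΦ.1]) hZ.eigenvalues_pos
  simpa only [← LinearMap.map_smul_of_tower, ← map_sum, hZ.1.sum_eigenvalues_smul_eigenProj,
    hZ.sum_inv_eigenvalues_smul_eigenProj] using this

end IsPosUnitalMap

theorem stmt0_general {n : ℕ} (θ : ℝ)
    (A B : Matrix (Fin n) (Fin n) ℂ)
    (m M : ℝ) (hm : 0 < m) (hmM : m ≤ M)
    (hmA : loewnerLE (m • (1 : Matrix (Fin n) (Fin n) ℂ)) (matRe A))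
    (hAM : loewnerLE (matRe A) (M • (1 : Matrix (Fin n) (Fin n) ℂ)))
    (hmB : loewnerLE (m • (1 : Matrix (Fin n) (Fin n) ℂ)) (matRe B))
    (hBM : loewnerLE (matRe B) (M • (1 : Matrix (Fin n) (Fin n) ℂ)))
    (v : ℝ) (hv0 : 0 ≤ v) (hv1 : v ≤ 1)
    (Φ : Matrix (Fin n) (Fin n) ℂ →ₗ[ℂ] Matrix (Fin n) (Fin n) ℂ)
    (hΦ : IsPosUnitalMap Φ) :
    loewnerLE
      ((Real.cos θ ^ 2) • Φ (matRe (amean v A B)) +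
        (m * M) • (Φ (matRe (hmean v A B)))⁻¹)
      ((M + m) • (1 : Matrix (Fin n) (Fin n) ℂ)) := by
  have hRA : (matRe A).PosDef := (PosDef.one.smul hm).of_le hmA
  have hRB : (matRe B).PosDef := (PosDef.one.smul hm).of_le hmB
  have hH := posDef_hmean hRA hRB hv0 hv1
  have hΦamean : 0 ≤ Φ (amean v (matRe A) (matRe B)) := by
    refine (hΦ.2 _ ?_).nonneg
    simpa only [amean, Complex.coe_smul] using (hRA.convexComb hRB hv0 hv1).posSemidef
  have hΦhmean : (Φ (matRe (hmean v A B)))⁻¹ ≤ Φ (hmean v (matRe A) (matRe B))⁻¹ :=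
    ((hΦ.map_posDef hH).inv_le_inv_of_le
      (hΦ.map_mono (hmean_matRe_le_matRe_hmean hRA hRB hv0 hv1))).trans
      (hΦ.inv_map_le_map_inv hH)
  rw [matRe_amean]
  calc Real.cos θ ^ 2 • Φ (amean v (matRe A) (matRe B)) + (m * M) • (Φ (matRe (hmean v A B)))⁻¹
      ≤ Φ (amean v (matRe A) (matRe B)) + (m * M) • Φ (hmean v (matRe A) (matRe B))⁻¹ :=
        add_le_add (smul_le_of_le_one_left hΦamean (Real.cos_sq_le_one θ))
          (smul_le_smul_of_nonneg_left hΦhmean (mul_pos hm (hm.trans_le hmM)).le)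
    _ = Φ (amean v (matRe A) (matRe B) + (m * M) • (hmean v (matRe A) (matRe B))⁻¹) := by
        rw [map_add, LinearMap.map_smul_of_tower]
    _ ≤ Φ ((M + m) • 1) := hΦ.map_mono (amean_add_smul_inv_hmean_le hm hmA hAM hmB hBM hv0 hv1)
    _ = (M + m) • 1 := by rw [LinearMap.map_smul_of_tower, hΦ.1]

theorem stmt0 {n : ℕ} (θ : ℝ) (hθ0 : 0 ≤ θ) (hθ1 : θ < Real.pi / 2)
    (A B : Matrix (Fin n) (Fin n) ℂ)
    (hA : sectorClass θ A) (hB : sectorClass θ B)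
    (m M : ℝ) (hm : 0 < m) (hmM : m ≤ M)
    (hmA : loewnerLE (m • (1 : Matrix (Fin n) (Fin n) ℂ)) (matRe A))
    (hAM : loewnerLE (matRe A) (M • (1 : Matrix (Fin n) (Fin n) ℂ)))
    (hmB : loewnerLE (m • (1 : Matrix (Fin n) (Fin n) ℂ)) (matRe B))
    (hBM : loewnerLE (matRe B) (M • (1 : Matrix (Fin n) (Fin n) ℂ)))
    (v : ℝ) (hv0 : 0 ≤ v) (hv1 : v ≤ 1)
    (Φ : Matrix (Fin n) (Fin n) ℂ →ₗ[ℂ] Matrix (Fin n) (Fin n) ℂ)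
    (hΦ : IsPosUnitalMap Φ) :
    loewnerLE
      ((Real.cos θ ^ 2) • Φ (matRe (amean v A B)) +
        (m * M) • (Φ (matRe (hmean v A B)))⁻¹)
      ((M + m) • (1 : Matrix (Fin n) (Fin n) ℂ)) :=
  stmt0_general θ A B m M hm hmM hmA hAM hmB hBM v hv0 hv1 Φ hΦ
end

section
/- Let 0 ≤ θ < π/2, let A and B be n×n complex matrices in the sector class S_θ, let 0 < m ≤ M with mI ≤ ℜA ≤ MI and mI ≤ ℜB ≤ MI, and let v ∈ [0,1]. Then ‖A∇_vB‖ ≤ sec³θ · K · ‖A!_vB‖, where ‖·‖ is the spectral norm and K = (M+m)²/(4mM). (This is the σ₁ = ∇_v, σ₂ = !_v, spectral-norm instance of the paper's unitarily invariant norm theorem, first bullet.) -/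
open Matrix
open scoped ComplexOrder

/-!
Write `w = a + i b` with `a = ℜ w`, `b = ℑ w`, and work in an arbitrary unital C⋆-algebra with its
Loewner order; `S_θ` is the condition `-t a ≤ b ≤ t a` with `t = tan θ`. Conjugating by `a^{-1/2}`
turns it into `-t ≤ X ≤ t` for `X = a^{-1/2} b a^{-1/2}`, whence `X² ≤ t²`, i.e. `b a⁻¹ b ≤ t² a`.
Together with the identity `w* a⁻¹ w = a + b a⁻¹ b` this gives `a ≤ w* a⁻¹ w ≤ sec²θ · a`, and three consequences:
`‖w‖ ≤ sec θ ‖ℜ w‖`; `w⁻¹ ∈ S_θ`, because `ℜ(w⁻¹) = (w⁻¹)* a w⁻¹` and `ℑ(w⁻¹) = -(w⁻¹)* b w⁻¹`;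
and, conjugating by `w⁻¹`, `ℜ(w⁻¹) ≤ (ℜ w)⁻¹ ≤ sec²θ · ℜ(w⁻¹)`.

Then `‖A ∇ B‖ ≤ sec θ ‖ℜA ∇ ℜB‖ ≤ sec θ · K ‖ℜA ! ℜB‖ ≤ sec³θ · K ‖A ! B‖`. The middle step is
Kantorovich's inequality, from `c + mM c⁻¹ ≤ M + m` for `m ≤ c ≤ M`. For the last one,
`W = A⁻¹ ∇ B⁻¹` is in `S_θ` and `ℜ W ≤ (ℜA)⁻¹ ∇ (ℜB)⁻¹`, so
`ℜA ! ℜB ≤ (ℜ W)⁻¹ ≤ sec²θ · ℜ(W⁻¹)`, and `‖ℜ(W⁻¹)‖ ≤ ‖W⁻¹‖ = ‖A ! B‖`.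
-/

open scoped ComplexStarModule
open CFC Ring
open Complex (I)

theorem ringInverse_algebraMap {𝕜 R : Type*} [Field 𝕜] [Ring R] [Algebra 𝕜 R] {r : 𝕜}
    (hr : r ≠ 0) : (algebraMap 𝕜 R r)⁻¹ʳ = algebraMap 𝕜 R r⁻¹ := by
  have hu : IsUnit (algebraMap 𝕜 R r) := (isUnit_iff_ne_zero.2 hr).map _
  rw [eq_comm, ← one_mul (algebraMap 𝕜 R r)⁻¹ʳ, eq_mul_inverse_iff_mul_eq _ _ _ hu,
    ← map_mul, inv_mul_cancel₀ hr, map_one]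

theorem IsUnit.star_ringInverse_mul_conjugate {R : Type*} [Ring R] [StarRing R] {w : R}
    (hw : IsUnit w) (x : R) : star w⁻¹ʳ * (star w * x * w) * w⁻¹ʳ = x := by
  rw [← mul_assoc, ← mul_assoc, ← star_mul, mul_inverse_cancel _ hw, star_one, one_mul,
    mul_inverse_cancel_right _ _ hw]

section StarAlgebra

variable {A : Type*} [Ring A] [StarRing A] [Algebra ℂ A] [StarModule ℂ A]

theorem realPart_ringInverse {w : A} (hw : IsUnit w) :
    (ℜ w⁻¹ʳ : A) = star w⁻¹ʳ * ℜ w * w⁻¹ʳ := by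
  have h : star w⁻¹ʳ * star w = 1 := by rw [← star_mul, mul_inverse_cancel w hw, star_one]
  simp only [realPart_apply_coe, smul_mul_assoc, mul_smul_comm, mul_add, add_mul,
    mul_inverse_cancel_right w _ hw, h, one_mul, add_comm]

theorem imaginaryPart_ringInverse {w : A} (hw : IsUnit w) :
    (ℑ w⁻¹ʳ : A) = -(star w⁻¹ʳ * ℑ w * w⁻¹ʳ) := by
  have h : star w⁻¹ʳ * star w = 1 := by rw [← star_mul, mul_inverse_cancel w hw, star_one]
  simp only [imaginaryPart_apply_coe, smul_mul_assoc, mul_smul_comm, mul_sub, sub_mul,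
    mul_inverse_cancel_right w _ hw, h, one_mul, ← smul_neg, neg_sub]

theorem star_mul_ringInverse_mul {a b : A} (ha : IsSelfAdjoint a) (hb : IsSelfAdjoint b)
    (hu : IsUnit a) : star (a + I • b) * a⁻¹ʳ * (a + I • b) = a + b * a⁻¹ʳ * b := by
  rw [star_add, star_smul, ha.star_eq, hb.star_eq, Complex.star_def, Complex.conj_I]
  simp only [add_mul, mul_add, smul_mul_assoc, mul_smul_comm, inverse_mul_cancel_right _ _ hu,
    mul_inverse_cancel _ hu, one_mul]
  match_scalars <;> simp

theorem mul_ringInverse_mul_star {a b : A} (ha : IsSelfAdjoint a) (hb : IsSelfAdjoint b)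
    (hu : IsUnit a) : (a + I • b) * a⁻¹ʳ * star (a + I • b) = a + b * a⁻¹ʳ * b := by
  rw [star_add, star_smul, ha.star_eq, hb.star_eq, Complex.star_def, Complex.conj_I]
  simp only [add_mul, mul_add, smul_mul_assoc, mul_smul_comm, inverse_mul_cancel_right _ _ hu,
    mul_inverse_cancel _ hu, one_mul]
  match_scalars <;> simp

theorem star_mul_ringInverse_realPart_mul {w : A} (hw : IsUnit (ℜ w : A)) :
    star w * (ℜ w : A)⁻¹ʳ * w = ℜ w + ℑ w * (ℜ w : A)⁻¹ʳ * ℑ w := by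
  simpa only [realPart_add_I_smul_imaginaryPart] using
    star_mul_ringInverse_mul (ℜ w).2 (ℑ w).2 hw

theorem mul_ringInverse_realPart_mul_star {w : A} (hw : IsUnit (ℜ w : A)) :
    w * (ℜ w : A)⁻¹ʳ * star w = ℜ w + ℑ w * (ℜ w : A)⁻¹ʳ * ℑ w := by
  simpa only [realPart_add_I_smul_imaginaryPart] using
    mul_ringInverse_mul_star (ℜ w).2 (ℑ w).2 hw

end StarAlgebra

section CStarAlgebra

variable {A : Type*} [CStarAlgebra A] [PartialOrder A] [StarOrderedRing A]

theorem mul_self_le_algebraMap_sq {x : A} {t : ℝ} (h₁ : -algebraMap ℝ A t ≤ x)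
    (h₂ : x ≤ algebraMap ℝ A t) : x * x ≤ algebraMap ℝ A (t ^ 2) := by
  have hcomm : Commute (algebraMap ℝ A t - x) (algebraMap ℝ A t + x) :=
    ((Commute.refl _).sub_left (Algebra.commute_algebraMap_right t x)).add_right
      ((Algebra.commute_algebraMap_left t x).sub_left (Commute.refl x))
  have h := hcomm.mul_nonneg (sub_nonneg.2 h₂) (neg_le_iff_add_nonneg'.1 h₁)
  rw [sub_mul, mul_add, mul_add, ← Algebra.commutes t x, ← map_mul, ← sq] at h
  exact sub_nonneg.1 (by simpa [sub_add_eq_sub_sub] using h)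

theorem mul_ringInverse_mul_le {a b : A} {t : ℝ} (ha : IsStrictlyPositive a)
    (h₁ : -(t • a) ≤ b) (h₂ : b ≤ t • a) : b * a⁻¹ʳ * b ≤ t ^ 2 • a := by
  have hconj (s : ℝ) : conjSqrt a⁻¹ʳ (s • a) = algebraMap ℝ A s := by
    rw [map_smul, conjSqrt_ringInverse_self a, Algebra.algebraMap_eq_smul_one]
  have hX : conjSqrt a⁻¹ʳ b * conjSqrt a⁻¹ʳ b ≤ algebraMap ℝ A (t ^ 2) := by
    refine mul_self_le_algebraMap_sq ?_ (hconj t ▸ conjSqrt_le_conjSqrt (c := a⁻¹ʳ) h₂)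
    simpa only [map_neg, hconj] using conjSqrt_le_conjSqrt (c := a⁻¹ʳ) h₁
  have hXX : conjSqrt a⁻¹ʳ (b * a⁻¹ʳ * b) = conjSqrt a⁻¹ʳ b * conjSqrt a⁻¹ʳ b := by
    simp only [conjSqrt_apply, mul_assoc]
    rw [← mul_assoc (sqrt a⁻¹ʳ) (sqrt a⁻¹ʳ), sqrt_mul_sqrt_self _ ha.ringInverse.nonneg]
  calc b * a⁻¹ʳ * b = conjSqrt a (conjSqrt a⁻¹ʳ (b * a⁻¹ʳ * b)) :=
        (conjSqrt_conjSqrt_ringInverse a _).symm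
    _ ≤ conjSqrt a (algebraMap ℝ A (t ^ 2)) := hXX ▸ conjSqrt_le_conjSqrt hX
    _ = t ^ 2 • a := by rw [Algebra.algebraMap_eq_smul_one, map_smul, conjSqrt_one a]

theorem convex_setOf_isStrictlyPositive : Convex ℝ {a : A | IsStrictlyPositive a} := by
  intro a ha b hb p q hp hq hpq
  rcases hp.eq_or_lt with rfl | hp
  · simpa [show q = 1 by linarith] using hb
  · exact (ha.smul hp).add_nonneg (smul_nonneg hq hb.nonneg)

/-- The sector class `S_θ` for `t = tan θ`, with the quadratic-form inequality
`|⟨(ℑ w) x, x⟩| ≤ t ⟨(ℜ w) x, x⟩` expressed in the Loewner order. -/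
def IsSectorial (t : ℝ) (w : A) : Prop :=
  IsStrictlyPositive (ℜ w : A) ∧ -(t • (ℜ w : A)) ≤ ℑ w ∧ (ℑ w : A) ≤ t • (ℜ w : A)

namespace IsSectorial

variable {t : ℝ} {w : A}

theorem realPart_le_star_mul_ringInverse_realPart_mul (hw : IsSectorial t w) :
    (ℜ w : A) ≤ star w * (ℜ w : A)⁻¹ʳ * w := by
  rw [star_mul_ringInverse_realPart_mul hw.1.isUnit, le_add_iff_nonneg_right]
  exact (ℑ w).2.conjugate_nonneg hw.1.ringInverse.nonneg

theorem star_mul_ringInverse_realPart_mul_le (hw : IsSectorial t w) :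
    star w * (ℜ w : A)⁻¹ʳ * w ≤ (1 + t ^ 2) • (ℜ w : A) := by
  rw [star_mul_ringInverse_realPart_mul hw.1.isUnit, add_smul, one_smul]
  exact add_le_add_right (mul_ringInverse_mul_le hw.1 hw.2.1 hw.2.2) _

theorem isUnit (hw : IsSectorial t w) : IsUnit w := by
  set u : A := ℜ w + ℑ w * (ℜ w : A)⁻¹ʳ * ℑ w
  have hu : IsUnit u := (hw.1.of_le (le_add_of_nonneg_right
    ((ℑ w).2.conjugate_nonneg hw.1.ringInverse.nonneg))).isUnit
  refine isUnit_iff_exists_and_exists.2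
    ⟨⟨(ℜ w : A)⁻¹ʳ * star w * u⁻¹ʳ, ?_⟩, ⟨u⁻¹ʳ * star w * (ℜ w : A)⁻¹ʳ, ?_⟩⟩
  · rw [← mul_assoc, ← mul_assoc, mul_ringInverse_realPart_mul_star hw.1.isUnit,
      mul_inverse_cancel _ hu]
  · rw [mul_assoc, mul_assoc, ← mul_assoc (star w),
      star_mul_ringInverse_realPart_mul hw.1.isUnit, inverse_mul_cancel _ hu]

theorem norm_le (hw : IsSectorial t w) : ‖w‖ ≤ √(1 + t ^ 2) * ‖(ℜ w : A)‖ := by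
  set a : A := (ℜ w : A)
  have hs : sqrt a * sqrt a⁻¹ʳ = 1 := by
    rw [sqrt_ringInverse, mul_inverse_cancel _ (IsStrictlyPositive.sqrt a hw.1).isUnit]
  have hsqrt : ‖sqrt a‖ ^ 2 = ‖a‖ := by
    rw [sq, ← CStarRing.norm_star_mul_self, (sqrt_nonneg a).isSelfAdjoint.star_eq,
      sqrt_mul_sqrt_self a hw.1.nonneg]
  have hrw : ‖sqrt a⁻¹ʳ * w‖ ^ 2 ≤ (1 + t ^ 2) * ‖a‖ := by
    have h : star (sqrt a⁻¹ʳ * w) * (sqrt a⁻¹ʳ * w) = star w * a⁻¹ʳ * w := by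
      rw [star_mul, (sqrt_nonneg a⁻¹ʳ).isSelfAdjoint.star_eq, mul_assoc, ← mul_assoc (sqrt _),
        sqrt_mul_sqrt_self _ hw.1.ringInverse.nonneg, ← mul_assoc]
    rw [sq, ← CStarRing.norm_star_mul_self, h]
    calc ‖star w * a⁻¹ʳ * w‖ ≤ ‖(1 + t ^ 2) • a‖ :=
          CStarAlgebra.norm_le_norm_of_nonneg_of_le
            (star_left_conjugate_nonneg hw.1.ringInverse.nonneg w)
            hw.star_mul_ringInverse_realPart_mul_le
      _ = (1 + t ^ 2) * ‖a‖ := by rw [norm_smul, Real.norm_of_nonneg (by positivity)]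
  calc ‖w‖ = ‖sqrt a * (sqrt a⁻¹ʳ * w)‖ := by rw [← mul_assoc, hs, one_mul]
    _ ≤ ‖sqrt a‖ * ‖sqrt a⁻¹ʳ * w‖ := norm_mul_le _ _
    _ ≤ √(1 + t ^ 2) * ‖a‖ := by
      rw [← sq_le_sq₀ (by positivity) (by positivity), mul_pow, mul_pow, hsqrt,
        Real.sq_sqrt (by positivity)]
      exact (mul_le_mul_of_nonneg_left hrw (norm_nonneg a)).trans_eq (by ring)

theorem ringInverse (hw : IsSectorial t w) : IsSectorial t w⁻¹ʳ := by
  have hu := hw.isUnit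
  have hconj := fun {x y : A} (h : x ≤ y) ↦ star_left_conjugate_le_conjugate h w⁻¹ʳ
  refine ⟨?_, ?_, ?_⟩
  · rw [realPart_ringInverse hu]
    exact hu.ringInverse.isStrictlyPositive_star_left_conjugate_iff.2 hw.1
  · rw [realPart_ringInverse hu, imaginaryPart_ringInverse hu, neg_le_neg_iff]
    simpa only [mul_smul_comm, smul_mul_assoc] using hconj hw.2.2
  · rw [realPart_ringInverse hu, imaginaryPart_ringInverse hu, neg_le]
    simpa only [mul_neg, neg_mul, mul_smul_comm, smul_mul_assoc] using hconj hw.2.1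

theorem realPart_ringInverse_le (hw : IsSectorial t w) :
    (ℜ w⁻¹ʳ : A) ≤ (ℜ w : A)⁻¹ʳ := by
  have h := star_left_conjugate_le_conjugate
    hw.realPart_le_star_mul_ringInverse_realPart_mul w⁻¹ʳ
  rwa [← realPart_ringInverse hw.isUnit, hw.isUnit.star_ringInverse_mul_conjugate] at h

theorem ringInverse_realPart_le (hw : IsSectorial t w) :
    (ℜ w : A)⁻¹ʳ ≤ (1 + t ^ 2) • (ℜ w⁻¹ʳ : A) := by
  have h := star_left_conjugate_le_conjugate hw.star_mul_ringInverse_realPart_mul_le w⁻¹ʳ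
  rwa [hw.isUnit.star_ringInverse_mul_conjugate, mul_smul_comm, smul_mul_assoc,
    ← realPart_ringInverse hw.isUnit] at h

end IsSectorial

theorem convex_setOf_isSectorial (t : ℝ) : Convex ℝ {w : A | IsSectorial t w} := by
  intro w hw z hz p q hp hq hpq
  simp only [Set.mem_ofPred_eq, IsSectorial, map_add, map_smul, AddSubgroup.coe_add,
    selfAdjoint.val_smul]
  refine ⟨convex_setOf_isStrictlyPositive hw.1 hz.1 hp hq hpq, ?_, ?_⟩
  · convert add_le_add (smul_le_smul_of_nonneg_left hw.2.1 hp)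
      (smul_le_smul_of_nonneg_left hz.2.1 hq) using 1
    module
  · convert add_le_add (smul_le_smul_of_nonneg_left hw.2.2 hp)
      (smul_le_smul_of_nonneg_left hz.2.2 hq) using 1
    module

theorem add_smul_ringInverse_le {a : A} {m M : ℝ} (hm : 0 < m)
    (hma : algebraMap ℝ A m ≤ a) (haM : a ≤ algebraMap ℝ A M) :
    a + (m * M) • a⁻¹ʳ ≤ algebraMap ℝ A (M + m) := by
  have ha : IsStrictlyPositive a := (isStrictlyPositive_algebraMap hm).of_le hma
  have hinv : Commute a a⁻¹ʳ :=
    (mul_inverse_cancel a ha.isUnit).trans (inverse_mul_cancel a ha.isUnit).symm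
  have hcomm : Commute (algebraMap ℝ A M - a) (a - algebraMap ℝ A m) := by
    apply Commute.sub_left <;> apply Commute.sub_right <;>
      first
      | exact Algebra.commute_algebraMap_left _ _
      | exact Algebra.commute_algebraMap_right _ _
      | exact Commute.refl a
  have hcomm' : Commute ((algebraMap ℝ A M - a) * (a - algebraMap ℝ A m)) a⁻¹ʳ := by
    apply Commute.mul_left <;> apply Commute.sub_left <;>
      first
      | exact Algebra.commute_algebraMap_left _ _
      | exact hinv
  -- the nonnegative element `(M - a) (a - m) a⁻¹` is `(M + m) - a - m M a⁻¹`
  have h := hcomm'.mul_nonneg (hcomm.mul_nonneg (sub_nonneg.2 haM) (sub_nonneg.2 hma))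
    ha.ringInverse.nonneg
  simp only [Algebra.algebraMap_eq_smul_one, sub_mul, mul_sub, smul_mul_assoc, mul_smul_comm,
    one_mul, mul_one, mul_inverse_cancel _ ha.isUnit, mul_inverse_cancel_right _ _ ha.isUnit]
    at h ⊢
  rw [← sub_nonneg]
  convert h using 1
  module

theorem norm_smul_add_smul_le_kantorovich {a b : A} {m M v : ℝ} (hm : 0 < m) (hmM : m ≤ M)
    (hma : algebraMap ℝ A m ≤ a) (haM : a ≤ algebraMap ℝ A M)
    (hmb : algebraMap ℝ A m ≤ b) (hbM : b ≤ algebraMap ℝ A M) (hv₀ : 0 ≤ v) (hv₁ : v ≤ 1) :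
    ‖v • a + (1 - v) • b‖ ≤ (M + m) ^ 2 / (4 * m * M) * ‖(v • a⁻¹ʳ + (1 - v) • b⁻¹ʳ)⁻¹ʳ‖ := by
  nontriviality A
  have ha : IsStrictlyPositive a := (isStrictlyPositive_algebraMap hm).of_le hma
  have hb : IsStrictlyPositive b := (isStrictlyPositive_algebraMap hm).of_le hmb
  have hv₁' : 0 ≤ 1 - v := sub_nonneg.2 hv₁
  have hM : 0 < M := hm.trans_le hmM
  set Y := v • a⁻¹ʳ + (1 - v) • b⁻¹ʳ
  have hY : IsStrictlyPositive Y :=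
    convex_setOf_isStrictlyPositive ha.ringInverse hb.ringInverse hv₀ hv₁' (by ring)
  set h := ‖Y⁻¹ʳ‖
  have hh : 0 < h := norm_pos_iff.2 hY.ringInverse.isUnit.ne_zero
  have hYh : algebraMap ℝ A h⁻¹ ≤ Y := by
    have := CStarAlgebra.ringInverse_le_ringInverse
      (IsSelfAdjoint.le_algebraMap_norm_self (a := Y⁻¹ʳ)) hY.ringInverse
    rwa [inverse_inverse hY.isUnit, ringInverse_algebraMap hh.ne'] at this
  have hsum : v • a + (1 - v) • b + (m * M) • Y ≤ algebraMap ℝ A (M + m) := by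
    calc _ = v • (a + (m * M) • a⁻¹ʳ) + (1 - v) • (b + (m * M) • b⁻¹ʳ) := by module
      _ ≤ v • algebraMap ℝ A (M + m) + (1 - v) • algebraMap ℝ A (M + m) := by
        gcongr
        exacts [add_smul_ringInverse_le hm hma haM, add_smul_ringInverse_le hm hmb hbM]
      _ = algebraMap ℝ A (M + m) := by module
  have hE : v • a + (1 - v) • b ≤ algebraMap ℝ A (M + m - m * M / h) := by
    calc _ ≤ algebraMap ℝ A (M + m) - (m * M) • Y := le_sub_iff_add_le.2 hsum
      _ ≤ algebraMap ℝ A (M + m) - (m * M) • algebraMap ℝ A h⁻¹ := by gcongr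
      _ = algebraMap ℝ A (M + m - m * M / h) := by
        simp only [Algebra.algebraMap_eq_smul_one, smul_smul, ← sub_smul, div_eq_mul_inv]
  have hE₀ : 0 ≤ v • a + (1 - v) • b :=
    add_nonneg (smul_nonneg hv₀ ha.nonneg) (smul_nonneg hv₁' hb.nonneg)
  have hr : 0 ≤ M + m - m * M / h := by
    rw [← algebraMap_le_algebraMap (β := A), map_zero]
    exact hE₀.trans hE
  calc ‖v • a + (1 - v) • b‖ ≤ M + m - m * M / h :=
        (CStarAlgebra.norm_le_iff_le_algebraMap _ hr hE₀).2 hE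
    _ ≤ (M + m) ^ 2 / (4 * m * M) * h := by
      have : (M + m) ^ 2 / (4 * m * M) * h - (M + m - m * M / h) =
          ((M + m) * h - 2 * m * M) ^ 2 / (4 * m * M * h) := by
        field_simp
        ring
      rw [← sub_nonneg, this]
      positivity

theorem IsSectorial.norm_ringInverse_realPart_mean_le {a b : A} {t v : ℝ}
    (ha : IsSectorial t a) (hb : IsSectorial t b) (hv₀ : 0 ≤ v) (hv₁ : v ≤ 1) :
    ‖(v • (ℜ a : A)⁻¹ʳ + (1 - v) • (ℜ b : A)⁻¹ʳ)⁻¹ʳ‖ ≤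
      (1 + t ^ 2) * ‖(v • a⁻¹ʳ + (1 - v) • b⁻¹ʳ)⁻¹ʳ‖ := by
  set W := v • a⁻¹ʳ + (1 - v) • b⁻¹ʳ
  have hW : IsSectorial t W :=
    convex_setOf_isSectorial t ha.ringInverse hb.ringInverse hv₀ (sub_nonneg.2 hv₁) (by ring)
  have hle : (ℜ W : A) ≤ v • (ℜ a : A)⁻¹ʳ + (1 - v) • (ℜ b : A)⁻¹ʳ := by
    simp only [W, map_add, map_smul, AddSubgroup.coe_add, selfAdjoint.val_smul]
    have := sub_nonneg.2 hv₁
    gcongr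
    exacts [ha.realPart_ringInverse_le, hb.realPart_ringInverse_le]
  calc _ ≤ ‖(1 + t ^ 2) • (ℜ W⁻¹ʳ : A)‖ :=
        CStarAlgebra.norm_le_norm_of_nonneg_of_le (hW.1.of_le hle).ringInverse.nonneg
          ((CStarAlgebra.ringInverse_le_ringInverse hle hW.1).trans hW.ringInverse_realPart_le)
    _ = (1 + t ^ 2) * ‖(ℜ W⁻¹ʳ : A)‖ := by rw [norm_smul, Real.norm_of_nonneg (by positivity)]
    _ ≤ (1 + t ^ 2) * ‖W⁻¹ʳ‖ := by gcongr; exact realPart.norm_le W⁻¹ʳ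

theorem IsSectorial.norm_mean_le {a b : A} {t m M v : ℝ}
    (ha : IsSectorial t a) (hb : IsSectorial t b) (hm : 0 < m) (hmM : m ≤ M)
    (hma : algebraMap ℝ A m ≤ ℜ a) (haM : (ℜ a : A) ≤ algebraMap ℝ A M)
    (hmb : algebraMap ℝ A m ≤ ℜ b) (hbM : (ℜ b : A) ≤ algebraMap ℝ A M)
    (hv₀ : 0 ≤ v) (hv₁ : v ≤ 1) :
    ‖v • a + (1 - v) • b‖ ≤
      √(1 + t ^ 2) * (1 + t ^ 2) * ((M + m) ^ 2 / (4 * m * M)) *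
        ‖(v • a⁻¹ʳ + (1 - v) • b⁻¹ʳ)⁻¹ʳ‖ := by
  have hK : 0 ≤ (M + m) ^ 2 / (4 * m * M) := by
    have := hm.trans_le hmM
    positivity
  have hab := convex_setOf_isSectorial t ha hb hv₀ (sub_nonneg.2 hv₁) (by ring)
  have hre : (ℜ (v • a + (1 - v) • b) : A) = v • (ℜ a : A) + (1 - v) • (ℜ b : A) := by
    simp only [map_add, map_smul, AddSubgroup.coe_add, selfAdjoint.val_smul]
  calc ‖v • a + (1 - v) • b‖ ≤ √(1 + t ^ 2) * ‖v • (ℜ a : A) + (1 - v) • (ℜ b : A)‖ :=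
        hre ▸ hab.norm_le
    _ ≤ √(1 + t ^ 2) * ((M + m) ^ 2 / (4 * m * M) *
          ‖(v • (ℜ a : A)⁻¹ʳ + (1 - v) • (ℜ b : A)⁻¹ʳ)⁻¹ʳ‖) := by
        gcongr
        exact norm_smul_add_smul_le_kantorovich hm hmM hma haM hmb hbM hv₀ hv₁
    _ ≤ √(1 + t ^ 2) * ((M + m) ^ 2 / (4 * m * M) *
          ((1 + t ^ 2) * ‖(v • a⁻¹ʳ + (1 - v) • b⁻¹ʳ)⁻¹ʳ‖)) := by
        gcongr
        exact ha.norm_ringInverse_realPart_mean_le hb hv₀ hv₁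
    _ = _ := by ring

end CStarAlgebra

theorem Matrix.IsHermitian.posSemidef_of_re_dotProduct_mulVec_nonneg {ι : Type*} [Fintype ι]
    {H : Matrix ι ι ℂ} (hH : H.IsHermitian) (h : ∀ x, 0 ≤ (star x ⬝ᵥ H *ᵥ x).re) :
    H.PosSemidef :=
  .of_dotProduct_mulVec_nonneg hH fun x ↦
    Complex.nonneg_iff.2 ⟨h x, (hH.im_star_dotProduct_mulVec_self x).symm⟩

section SquareMatrix

open scoped Matrix.Norms.L2Operator MatrixOrder

variable {n : ℕ}

theorem matRe_eq_realPart (X : Matrix (Fin n) (Fin n) ℂ) : matRe X = ℜ X := by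
  rw [matRe, realPart_apply_coe, ← Complex.coe_smul, star_eq_conjTranspose]
  norm_num

theorem matIm_eq_imaginaryPart (X : Matrix (Fin n) (Fin n) ℂ) : matIm X = ℑ X := by
  rw [matIm, imaginaryPart_apply_coe, ← Complex.coe_smul, smul_smul, star_eq_conjTranspose]
  congr 1
  field_simp
  simp

theorem matSpectralNorm_eq_norm (X : Matrix (Fin n) (Fin n) ℂ) : matSpectralNorm X = ‖X‖ :=
  rfl

theorem loewnerLE_iff {X Y : Matrix (Fin n) (Fin n) ℂ} : loewnerLE X Y ↔ X ≤ Y := Iff.rfl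

theorem sectorClass.isSectorial {θ : ℝ} {X : Matrix (Fin n) (Fin n) ℂ}
    (hX : sectorClass θ X) : IsSectorial (Real.tan θ) X := by
  obtain ⟨hre, him⟩ := hX
  simp only [matRe_eq_realPart, matIm_eq_imaginaryPart] at hre him
  refine ⟨isStrictlyPositive_iff_posDef.2 hre, ?_, ?_⟩ <;> rw [Matrix.le_iff] <;>
    refine Matrix.IsHermitian.posSemidef_of_re_dotProduct_mulVec_nonneg ?_ fun x ↦ ?_
  · exact (ℑ X).2.sub ((IsSelfAdjoint.all _).smul (ℜ X).2).neg
  · simp only [sub_neg_eq_add, add_mulVec, smul_mulVec, dotProduct_add, dotProduct_smul,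
      Complex.add_re, Complex.real_smul, Complex.re_ofReal_mul]
    linarith [neg_abs_le (star x ⬝ᵥ (ℑ X : Matrix (Fin n) (Fin n) ℂ) *ᵥ x).re, him x]
  · exact ((IsSelfAdjoint.all _).smul (ℜ X).2).sub (ℑ X).2
  · simp only [sub_mulVec, smul_mulVec, dotProduct_sub, dotProduct_smul, Complex.sub_re,
      Complex.real_smul, Complex.re_ofReal_mul]
    linarith [le_abs_self (star x ⬝ᵥ (ℑ X : Matrix (Fin n) (Fin n) ℂ) *ᵥ x).re, him x]

theorem matSpectralNorm_amean_le {θ m M v : ℝ} {A B : Matrix (Fin n) (Fin n) ℂ}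
    (hA : sectorClass θ A) (hB : sectorClass θ B) (hm : 0 < m) (hmM : m ≤ M)
    (hmA : loewnerLE (m • (1 : Matrix (Fin n) (Fin n) ℂ)) (matRe A))
    (hAM : loewnerLE (matRe A) (M • (1 : Matrix (Fin n) (Fin n) ℂ)))
    (hmB : loewnerLE (m • (1 : Matrix (Fin n) (Fin n) ℂ)) (matRe B))
    (hBM : loewnerLE (matRe B) (M • (1 : Matrix (Fin n) (Fin n) ℂ)))
    (hv₀ : 0 ≤ v) (hv₁ : v ≤ 1) :
    matSpectralNorm (amean v A B) ≤
      √(1 + Real.tan θ ^ 2) * (1 + Real.tan θ ^ 2) * ((M + m) ^ 2 / (4 * m * M)) *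
        matSpectralNorm (hmean v A B) := by
  simp only [loewnerLE_iff, matRe_eq_realPart, ← Algebra.algebraMap_eq_smul_one]
    at hmA hAM hmB hBM
  simpa only [matSpectralNorm_eq_norm, amean, hmean, Complex.coe_smul,
    nonsing_inv_eq_ringInverse]
    using hA.isSectorial.norm_mean_le hB.isSectorial hm hmM hmA hAM hmB hBM hv₀ hv₁

end SquareMatrix

theorem stmt11 {n : ℕ} (θ : ℝ) (hθ0 : 0 ≤ θ) (hθ1 : θ < Real.pi / 2)
    (A B : Matrix (Fin n) (Fin n) ℂ)
    (hA : sectorClass θ A) (hB : sectorClass θ B)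
    (m M : ℝ) (hm : 0 < m) (hmM : m ≤ M)
    (hmA : loewnerLE (m • (1 : Matrix (Fin n) (Fin n) ℂ)) (matRe A))
    (hAM : loewnerLE (matRe A) (M • (1 : Matrix (Fin n) (Fin n) ℂ)))
    (hmB : loewnerLE (m • (1 : Matrix (Fin n) (Fin n) ℂ)) (matRe B))
    (hBM : loewnerLE (matRe B) (M • (1 : Matrix (Fin n) (Fin n) ℂ)))
    (v : ℝ) (hv0 : 0 ≤ v) (hv1 : v ≤ 1) :
    matSpectralNorm (amean v A B) ≤ (Real.cos θ)⁻¹ ^ 3 * ((M + m) ^ 2 / (4 * m * M)) * matSpectralNorm (hmean v A B) := by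
  have hcos : 0 < Real.cos θ := Real.cos_pos_of_mem_Ioo ⟨by linarith [Real.pi_pos], hθ1⟩
  have hsec : 1 + Real.tan θ ^ 2 = (Real.cos θ)⁻¹ ^ 2 := by
    rw [inv_pow, ← Real.inv_one_add_tan_sq hcos.ne', inv_inv]
  have h := matSpectralNorm_amean_le hA hB hm hmM hmA hAM hmB hBM hv0 hv1
  rwa [hsec, Real.sqrt_sq (inv_nonneg.2 hcos.le), ← pow_succ'] at h
end
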